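/- arXiv:1506.06710 — 5 statements merged into one kernel-verified Lean document; each statement's English description precedes it below -/
import Mathlib

section
/- Let R be a finite commutative local ring of odd characteristic. Then the set (R^×)² = {a² : a ∈ R^×} is a subgroup of R^× of index exactly 2. -/
/-- Let R be a finite commutative local ring of odd characteristic. Then the set
`(R^×)² = {a² : a ∈ R^×}` is a subgroup of `R^×` of index exactly 2. -/
theorem stmt_1 (R : Type*) [CommRing R] [IsLocalRing R] [Fintype R]
    (hchar : Odd (ringChar R)) :
    (powMonoidHom 2 : Rˣ →* Rˣ).range.index = 2 := by
  set f : Rˣ →* Rˣ := powMonoidHom 2 with hf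
  set k := IsLocalRing.ResidueField R with hk
  have hfield : Finite k := Finite.of_surjective _ (IsLocalRing.residue_surjective (R := R))
  have hdvd : ringChar k ∣ ringChar R := by
    apply ringChar.dvd
    have h0 : ((ringChar R : ℕ) : R) = 0 := ringChar.Nat.cast_ringChar
    rw [← map_natCast (IsLocalRing.residue R), h0, map_zero]
  have hkodd : Odd (ringChar k) := hchar.of_dvd_nat hdvd
  have hk2 : (2 : k) ≠ 0 := by
    have := Fintype.ofFinite k
    refine Ring.two_ne_zero ?_
    intro h; rw [h] at hkodd; exact (Nat.not_odd_iff_even.mpr even_two) hkodd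
  -- 2 is a unit in R
  have h2 : IsUnit (2 : R) := by
    refine (IsLocalRing.residue_ne_zero_iff_isUnit _).mp ?_
    rw [map_ofNat]; exact hk2
  have h20 : (2 : R) ≠ 0 := fun h => hk2 (by rw [← map_ofNat (IsLocalRing.residue R) 2]; simp [h])
  have hne : (-1 : Rˣ) ≠ 1 := by
    intro h
    apply h20
    have : ((-1 : Rˣ) : R) = ((1 : Rˣ) : R) := by rw [h]
    simp at this
    linear_combination -this
  -- kernel of squaring is {1, -1}
  have hker : f.ker = Subgroup.zpowers (-1 : Rˣ) := by
    ext u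
    simp only [MonoidHom.mem_ker, hf, powMonoidHom_apply]
    constructor
    · intro hu
      have hval : ((u : R) + 1) * ((u : R) - 1) = 0 := by
        have : ((u : R))^2 = 1 := by
          have := congrArg (Units.val) hu; simpa using this
        linear_combination this
      have : IsUnit ((u : R) + 1) ∨ IsUnit (1 - (u : R)) := by
        apply IsLocalRing.isUnit_or_isUnit_of_isUnit_add
        rw [show ((u:R)+1) + (1-(u:R)) = 2 by ring]
        exact h2
      rcases this with h | h
      · have h1 : (u : R) - 1 = 0 := (h.mul_right_eq_zero).mp hval
        have hu1 : u = 1 := Units.ext (by simpa using sub_eq_zero.mp h1)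
        exact ⟨0, by simp [hu1]⟩
      · have hval' : (1 - (u : R)) * ((u : R) + 1) = 0 := by linear_combination -hval
        have h1 : (u : R) + 1 = 0 := (h.mul_right_eq_zero).mp hval'
        have hu1 : u = -1 := Units.ext (by simpa using eq_neg_of_add_eq_zero_left h1)
        exact ⟨1, by simp [hu1]⟩
    · rintro ⟨n, rfl⟩
      have : ((-1 : Rˣ)^n)^(2:ℕ) = ((-1 : Rˣ)^(2:ℕ))^n := by
        rw [← zpow_natCast, ← zpow_mul, mul_comm, zpow_mul, zpow_natCast]
      rw [this, neg_one_sq, one_zpow]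
  have hcardker : Nat.card f.ker = 2 := by
    rw [hker, Nat.card_zpowers]
    exact orderOf_eq_prime neg_one_sq hne
  -- counting
  have hrange : Nat.card f.range = f.ker.index := by
    rw [Subgroup.index_eq_card]
    exact Nat.card_congr (QuotientGroup.quotientKerEquivRange f).toEquiv.symm
  have e1 : Nat.card f.range * f.range.index = Nat.card Rˣ := Subgroup.card_mul_index _
  have e2 : Nat.card f.ker * f.ker.index = Nat.card Rˣ := Subgroup.card_mul_index _
  have hpos : 0 < Nat.card f.range := Nat.card_pos
  have : Nat.card f.range * f.range.index = Nat.card f.range * 2 := by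
    rw [e1, ← e2, hcardker, hrange]; ring
  exact Nat.eq_of_mul_eq_mul_left hpos this
end

section
/- Let R be a finite commutative local ring of odd characteristic in which -1 is not a square of a unit, and let z be a unit of R that is not a square of a unit. Then there exist units x and y of R such that z = (1 + x²)·y². -/
/-!
Since 2 is a unit, the squaring map on `Rˣ` has kernel `{1, -1}`, so the unit squares form a
subgroup of index 2 and any two non-square units differ by a square factor. It therefore suffices
to find one unit of the form `1 + x²` that is not a square. Such an `x` exists: otherwise
`k = a²` and `1 + (a⁻¹)² = b²` would give `k + 1 = (a b)²`, so by induction every positive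
integer, the characteristic included, would be a unit square in `R`, yet the characteristic is
`0` there. Finally `1 + x²` is always a unit: if it lay in the maximal ideal `𝔪`, then
`-x² ∈ 1 + 𝔪` would be a square (squaring is a bijection of `1 + 𝔪`, as `R` is finite and 2 is
a unit), making `-1` a unit square.
-/

open IsLocalRing

lemma eq_of_sq_eq_sq_of_isUnit_add {R : Type*} [CommRing R] {a b : R} (h : a ^ 2 = b ^ 2)
    (hab : IsUnit (a + b)) : a = b := by
  have : (a - b) * (a + b) = 0 := by linear_combination h
  exact sub_eq_zero.mp ((hab.mul_left_eq_zero).mp this)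

lemma exists_forall_one_add_sq_ne_sq (R : Type*) [CommRing R] [Nontrivial R] [Finite R] :
    ∃ x : Rˣ, ∀ y : Rˣ, 1 + (x : R) ^ 2 ≠ (y : R) ^ 2 := by
  by_contra! h
  have succ_sq : ∀ k : ℕ, ∃ a : Rˣ, ((k + 1 : ℕ) : R) = (a : R) ^ 2 := by
    intro k
    induction k with
    | zero => exact ⟨1, by simp⟩
    | succ k ih =>
      obtain ⟨a, ha⟩ := ih
      obtain ⟨b, hb⟩ := h a⁻¹
      refine ⟨a * b, ?_⟩
      have hinv : ((a : R) * (a⁻¹ : Rˣ)) ^ 2 = 1 := by simp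
      push_cast at ha ⊢
      linear_combination ha + (a : R) ^ 2 * hb - hinv
  obtain ⟨a, ha⟩ := succ_sq (ringChar R - 1)
  rw [Nat.sub_add_cancel (Nat.one_le_iff_ne_zero.mpr (CharP.char_ne_zero_of_finite R _)),
    ringChar.Nat.cast_ringChar] at ha
  exact (a.isUnit.pow 2).ne_zero ha.symm

namespace IsLocalRing

variable {R : Type*} [CommRing R] [IsLocalRing R]

lemma isUnit_add_of_mem_maximalIdeal {a s : R} (ha : IsUnit a) (hs : s ∈ maximalIdeal R) :
    IsUnit (a + s) := by
  have : IsUnit (a + s + -s) := by simpa using ha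
  exact (isUnit_or_isUnit_of_isUnit_add this).resolve_right (hs ∘ (IsUnit.neg_iff s).mp)

lemma units_sq_eq_one_iff (h2 : IsUnit (2 : R)) {a : Rˣ} : a ^ 2 = 1 ↔ a = 1 ∨ a = -1 := by
  refine ⟨fun ha => ?_, by rintro (rfl | rfl) <;> simp⟩
  have ha' : (a : R) ^ 2 = 1 := by simpa using congrArg Units.val ha
  have hsum : IsUnit (((a : R) + 1) + (1 - a)) := by convert h2 using 1; ring
  rcases isUnit_or_isUnit_of_isUnit_add hsum with h | h
  · exact .inl (Units.ext (eq_of_sq_eq_sq_of_isUnit_add (by simpa using ha') h))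
  · refine .inr (Units.ext (eq_of_sq_eq_sq_of_isUnit_add (b := -1) (by simpa using ha') ?_))
    simpa [sub_eq_add_neg, add_comm] using h.neg

lemma index_square_units [Finite R] (h2 : IsUnit (2 : R)) : (Subgroup.square Rˣ).index = 2 := by
  have hsq : Subgroup.square Rˣ = (powMonoidHom 2 : Rˣ →* Rˣ).range := by
    ext a
    simp [isSquare_iff_exists_sq, eq_comm]
  have hker : ((powMonoidHom 2 : Rˣ →* Rˣ).ker : Set Rˣ) = {1, -1} := by
    ext a
    simp [units_sq_eq_one_iff h2]
  have hne : (1 : Rˣ) ≠ -1 := by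
    intro h
    have h' : (1 : R) = -1 := by simpa using congrArg Units.val h
    have h0 : (2 : R) = 0 := by linear_combination h'
    exact not_isUnit_zero (h0 ▸ h2)
  rw [hsq, Subgroup.index_range, ← SetLike.coe_sort_coe, hker, Nat.card_coe_set_eq,
    Set.ncard_pair hne]

lemma isSquare_one_add_of_mem_maximalIdeal [Finite R] (h2 : IsUnit (2 : R)) {t : R}
    (ht : t ∈ maximalIdeal R) : IsSquare (1 + t) := by
  let f : maximalIdeal R → maximalIdeal R := fun u =>
    ⟨(1 + u) ^ 2 - 1, by
      have : (1 + (u : R)) ^ 2 - 1 = u * (2 + u) := by ring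
      rw [this]
      exact (maximalIdeal R).mul_mem_right _ u.2⟩
  have hf : Function.Injective f := by
    rintro ⟨u, hu⟩ ⟨v, hv⟩ huv
    have hsq : (1 + u) ^ 2 = (1 + v) ^ 2 := by
      simpa [f] using congrArg Subtype.val huv
    have hunit : IsUnit ((1 + u) + (1 + v)) := by
      convert isUnit_add_of_mem_maximalIdeal h2 ((maximalIdeal R).add_mem hu hv) using 1
      ring
    exact Subtype.ext (add_left_cancel (eq_of_sq_eq_sq_of_isUnit_add hsq hunit))
  obtain ⟨u, hu⟩ := (Finite.injective_iff_surjective.mp hf) ⟨t, ht⟩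
  refine ⟨1 + u, ?_⟩
  have : (1 + (u : R)) ^ 2 - 1 = t := congrArg Subtype.val hu
  linear_combination -this

lemma isUnit_one_add_sq [Finite R] (h2 : IsUnit (2 : R))
    (hm1 : ∀ a : Rˣ, (-1 : R) ≠ (a : R) ^ 2) (x : Rˣ) : IsUnit (1 + (x : R) ^ 2) := by
  by_contra hx
  obtain ⟨w, hw⟩ := isSquare_one_add_of_mem_maximalIdeal h2
    ((maximalIdeal R).neg_mem (show 1 + (x : R) ^ 2 ∈ maximalIdeal R from hx))
  have hw' : w ^ 2 = -(x : R) ^ 2 := by linear_combination -hw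
  obtain ⟨W, rfl⟩ : IsUnit w :=
    isUnit_of_mul_isUnit_left (x := w) (y := w) (by rw [← sq, hw']; exact (x.isUnit.pow 2).neg)
  apply hm1 (W * x⁻¹)
  have hinv : ((x : R) * (x⁻¹ : Rˣ)) ^ 2 = 1 := by simp
  push_cast
  linear_combination (-((x⁻¹ : Rˣ) : R) ^ 2) * hw' + hinv

end IsLocalRing

/-- Let R be a finite commutative local ring of odd characteristic in which -1 is
not a square of a unit, and let z be a unit of R that is not a square of a unit. Then there exist
units x and y of R such that `z = (1 + x²)·y²`. -/
theorem stmt_5 (R : Type*) [CommRing R] [IsLocalRing R] [Fintype R]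
    (hchar : Odd (ringChar R)) (hm1 : ∀ a : Rˣ, (-1 : R) ≠ (a : R) ^ 2)
    (z : Rˣ) (hz : ∀ a : Rˣ, z ≠ a ^ 2) :
    ∃ x y : Rˣ, (z : R) = (1 + (x : R) ^ 2) * (y : R) ^ 2 := by
  have h2 : IsUnit (2 : R) := by
    rw [← Nat.cast_ofNat, isUnit_iff_not_dvd_char, ← even_iff_two_dvd, Nat.not_even_iff_odd]
    exact hchar
  obtain ⟨x, hx⟩ := exists_forall_one_add_sq_ne_sq R
  obtain ⟨w, hw⟩ := isUnit_one_add_sq h2 hm1 x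
  have hw_sq : w ∉ Subgroup.square Rˣ := by
    rintro ⟨a, rfl⟩
    exact hx a (by rw [← hw]; push_cast; ring)
  have hz_sq : z ∉ Subgroup.square Rˣ := by
    simpa [isSquare_iff_exists_sq] using hz
  obtain ⟨y, hy⟩ : z * w⁻¹ ∈ Subgroup.square Rˣ := by
    simp [Subgroup.mul_mem_iff_of_index_two (index_square_units h2), hz_sq, hw_sq]
  have hzy : z = y * y * w := mul_inv_eq_iff_eq_mul.mp hy
  refine ⟨x, y, ?_⟩
  rw [hzy, ← hw]
  push_cast
  ring
end

section
/- Let R be a finite commutative local ring of odd characteristic, let z be a unit of R that is not a square of a unit, and let ν be a positive integer. Then the scalar matrix z·I_{2ν} is cogredient to the identity matrix I_{2ν} over R. -/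
/-!
Write `z⁻¹ = a² + b²`. Such a representation exists in the residue field, a finite field, and
lifts to `R` by Hensel's lemma: `R` is complete because its maximal ideal is nilpotent, and the
lift is simple because `2` is a unit. With the symplectic matrix `J` (`Jᵀ = -J`, `J² = -1`),
the matrix `P = a • 1 + b • J` satisfies `P * Pᵀ = (a² + b²) • 1 = z⁻¹ • 1`, hence
`P * (z • 1) * Pᵀ = 1`.
-/

/-- Two square matrices are cogredient if `P * S1 * P.transpose = S2` for some invertible `P`. -/
def Cogredient {R : Type*} [CommRing R] {n : Type*} [Fintype n] [DecidableEq n]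
    (S1 S2 : Matrix n n R) : Prop :=
  ∃ P : Matrix n n R, IsUnit P.det ∧ P * S1 * P.transpose = S2

/-- Block diagonal sum `A ⊕ B` of square matrices. -/
def matOplus {R : Type*} [CommRing R] {a b : ℕ}
    (A : Matrix (Fin a) (Fin a) R) (B : Matrix (Fin b) (Fin b) R) :
    Matrix (Fin (a + b)) (Fin (a + b)) R :=
  (Matrix.reindex finSumFinEquiv finSumFinEquiv) (Matrix.fromBlocks A 0 0 B)

/-- The hyperbolic matrix `H_{2ν} = [[0, I_ν], [I_ν, 0]]`. -/
def hypMat (R : Type*) [CommRing R] (ν : ℕ) : Matrix (Fin (ν + ν)) (Fin (ν + ν)) R :=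
  (Matrix.reindex finSumFinEquiv finSumFinEquiv)
    (Matrix.fromBlocks (0 : Matrix (Fin ν) (Fin ν) R) 1 1 0)

open IsLocalRing Matrix Polynomial

theorem isUnit_two_of_odd_ringChar {R : Type*} [CommRing R] (hchar : Odd (ringChar R)) :
    IsUnit (2 : R) := by
  obtain ⟨m, hm⟩ := hchar
  refine .of_mul_eq_one ((m + 1 : ℕ) : R) ?_
  calc (2 : R) * ((m + 1 : ℕ) : R) = ((2 * m + 1 : ℕ) : R) + 1 := by push_cast; ring
    _ = 1 := by rw [← hm, ringChar.Nat.cast_ringChar, zero_add]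

theorem FiniteField.exists_sq_add_sq {K : Type*} [Field K] [Finite K] (c : K) :
    ∃ a b : K, a ^ 2 + b ^ 2 = c := by
  have := Fintype.ofFinite K
  by_cases h2 : ringChar K = 2
  · obtain ⟨r, hr⟩ := FiniteField.isSquare_of_char_two h2 c
    exact ⟨r, 0, by rw [hr]; ring⟩
  · have hcard : Fintype.card K % 2 = 1 := by
      have := mt FiniteField.even_card_iff_char_two.mpr h2
      omega
    obtain ⟨a, b, hab⟩ := FiniteField.exists_root_sum_quadratic (degree_X_pow 2)
      (degree_X_pow_sub_C two_pos c) hcard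
    refine ⟨a, b, ?_⟩
    simp only [eval_pow, eval_X, eval_sub, eval_C] at hab
    linear_combination hab

theorem exists_sq_add_sq_eq_of_isUnit {R : Type*} [CommRing R] [IsLocalRing R] [Finite R]
    (h2 : IsUnit (2 : R)) {w : R} (hw : IsUnit w) : ∃ a b : R, a ^ 2 + b ^ 2 = w := by
  have : Finite (ResidueField R) := .of_surjective _ residue_surjective
  obtain ⟨x, y, hx, hxy⟩ :
      ∃ x y : ResidueField R, x ≠ 0 ∧ x ^ 2 + y ^ 2 = residue R w := by
    obtain ⟨x, y, hxy⟩ := FiniteField.exists_sq_add_sq (residue R w)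
    have hw0 : residue R w ≠ 0 := (residue_ne_zero_iff_isUnit w).mpr hw
    by_cases hx : x = 0
    · refine ⟨y, x, fun hy ↦ hw0 ?_, by rw [← hxy, add_comm]⟩
      rw [← hxy, hx, hy]; ring
    · exact ⟨x, y, hx, hxy⟩
  obtain ⟨a₀, rfl⟩ := residue_surjective x
  obtain ⟨b, rfl⟩ := residue_surjective y
  have hmonic : (X ^ 2 - C (w - b ^ 2)).Monic := monic_X_pow_sub_C _ two_ne_zero
  have hroot : (X ^ 2 - C (w - b ^ 2)).eval a₀ ∈ maximalIdeal R := by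
    rw [← residue_eq_zero_iff]
    simp only [eval_sub, eval_pow, eval_X, eval_C, map_sub, map_pow, ← hxy]
    ring
  have hsimple : IsUnit (residue R ((X ^ 2 - C (w - b ^ 2)).derivative.eval a₀)) := by
    have hderiv : (X ^ 2 - C (w - b ^ 2)).derivative.eval a₀ = 2 * a₀ := by
      simp only [derivative_sub, derivative_X_pow, derivative_C, eval_sub, eval_mul, eval_pow,
        eval_X, eval_C, eval_zero]
      ring
    rw [hderiv, map_mul, isUnit_iff_ne_zero]
    exact mul_ne_zero ((residue_ne_zero_iff_isUnit 2).mpr h2) hx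
  obtain ⟨a, ha, -⟩ := HenselianRing.is_henselian _ hmonic a₀ hroot hsimple
  refine ⟨a, b, ?_⟩
  simp only [IsRoot, eval_sub, eval_pow, eval_X, eval_C] at ha
  linear_combination ha

theorem Cogredient.reindex {R : Type*} [CommRing R] {m n : Type*} [Fintype m] [DecidableEq m]
    [Fintype n] [DecidableEq n] {S₁ S₂ : Matrix m m R} (e : m ≃ n)
    (h : Cogredient S₁ S₂) :
    Cogredient (Matrix.reindex e e S₁) (Matrix.reindex e e S₂) := by
  obtain ⟨P, hP, rfl⟩ := h
  refine ⟨Matrix.reindex e e P, by rwa [det_reindex_self], ?_⟩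
  simp only [reindex_apply, transpose_submatrix, submatrix_mul_equiv]

theorem mul_transpose_smul_one_add_smul_J {R : Type*} [CommRing R] {l : Type*} [Fintype l]
    [DecidableEq l] (a b : R) :
    (a • 1 + b • J l R) * (a • 1 + b • J l R)ᵀ =
      (a ^ 2 + b ^ 2) • (1 : Matrix (l ⊕ l) (l ⊕ l) R) := by
  simp only [transpose_add, transpose_smul, transpose_one, J_transpose, add_mul, mul_add,
    smul_mul_smul, mul_one, one_mul, mul_neg, smul_neg, J_squared]
  module

theorem cogredient_smul_one_of_mul_transpose {R : Type*} [CommRing R] {n : Type*} [Fintype n]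
    [DecidableEq n] {z w : R} (hzw : z * w = 1) {P : Matrix n n R} (hP : P * Pᵀ = w • 1) :
    Cogredient (z • (1 : Matrix n n R)) 1 := by
  have key : P * (z • 1) * Pᵀ = 1 := by
    rw [Matrix.mul_smul, Matrix.mul_one, Matrix.smul_mul, hP, smul_smul, hzw, one_smul]
  have hinv : P * (z • 1 * Pᵀ) = 1 := by rw [← Matrix.mul_assoc, key]
  exact ⟨P, isUnit_det_of_right_inverse hinv, key⟩

theorem stmt_6_general (R : Type*) [CommRing R] [IsLocalRing R] [Fintype R]
    (hchar : Odd (ringChar R)) (z : Rˣ) (ν : ℕ) :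
    Cogredient ((z : R) • (1 : Matrix (Fin (ν + ν)) (Fin (ν + ν)) R)) 1 := by
  obtain ⟨a, b, hab⟩ := exists_sq_add_sq_eq_of_isUnit (isUnit_two_of_odd_ringChar hchar)
    (z⁻¹).isUnit
  have hsum : Cogredient ((z : R) • (1 : Matrix (Fin ν ⊕ Fin ν) (Fin ν ⊕ Fin ν) R)) 1 :=
    cogredient_smul_one_of_mul_transpose z.mul_inv
      (by rw [mul_transpose_smul_one_add_smul_J, hab])
  simpa only [reindex_apply, submatrix_smul, Pi.smul_apply, submatrix_one_equiv] using
    hsum.reindex finSumFinEquiv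

/-- z·I_{2ν} is cogredient to I_{2ν} for a non-square unit z. -/
theorem stmt_6 (R : Type*) [CommRing R] [IsLocalRing R] [Fintype R]
    (hchar : Odd (ringChar R)) (z : Rˣ) (hz : ∀ a : Rˣ, z ≠ a ^ 2)
    (ν : ℕ) (hν : 0 < ν) :
    Cogredient ((z : R) • (1 : Matrix (Fin (ν + ν)) (Fin (ν + ν)) R)) 1 :=
  stmt_6_general R hchar z ν
end

section
/- Let R be a finite commutative local ring of odd characteristic in which -1 is a square of a unit, and let ν be a positive integer. Then the identity matrix I_{2ν} is cogredient to the hyperbolic matrix H_{2ν} over R. -/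
/-- if -1 is a square of a unit, then `I_{2ν}` is cogredient to `H_{2ν}`. -/
theorem stmt_11 (R : Type*) [CommRing R] [IsLocalRing R] [Fintype R]
    (hchar : Odd (ringChar R)) (hm1 : ∃ a : Rˣ, (-1 : R) = (a : R) ^ 2)
    (ν : ℕ) (hν : 0 < ν) :
    Cogredient (1 : Matrix (Fin (ν + ν)) (Fin (ν + ν)) R) (hypMat R ν) := by
  obtain ⟨a, ha⟩ := hm1
  set i : R := (a : R) with hidef
  have hi : i * i = -1 := by rw [← sq]; exact ha.symm
  -- 2 is invertible since the characteristic is odd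
  obtain ⟨m, hm⟩ := hchar
  have hcast : ((ringChar R : ℕ) : R) = 0 := (ringChar.spec R (ringChar R)).mpr dvd_rfl
  set h : R := (m : R) + 1 with hhdef
  have h2 : (2 : R) * h = 1 := by
    have : ((2 * m + 1 : ℕ) : R) = 0 := by rw [← hm]; exact hcast
    push_cast at this
    have := this
    ring_nf at this ⊢
    linear_combination this
  set Q : Matrix (Fin ν ⊕ Fin ν) (Fin ν ⊕ Fin ν) R :=
    Matrix.fromBlocks (1 : Matrix (Fin ν) (Fin ν) R) (i • 1) (h • 1) ((-(h * i)) • 1) with hQ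
  let P : Matrix (Fin (ν + ν)) (Fin (ν + ν)) R :=
    (Matrix.reindex finSumFinEquiv finSumFinEquiv) Q
  have hb : Q * Q.transpose = Matrix.fromBlocks 0 1 1 0 := by
    rw [hQ, Matrix.fromBlocks_transpose, Matrix.fromBlocks_multiply]
    simp only [Matrix.transpose_smul, Matrix.transpose_one, smul_mul_smul_comm, one_mul,
      mul_one, Matrix.smul_mul, Matrix.mul_smul, smul_smul, Matrix.mul_one, Matrix.one_mul,
      ← neg_smul, ← add_smul]
    have s2 : h + i * -(h * i) = 1 := by linear_combination h2 - h * hi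
    have s3 : h + -(h * i) * i = 1 := by linear_combination h2 - h * hi
    have s4 : h * h + -(h * i) * -(h * i) = 0 := by linear_combination h * h * hi
    rw [hi, s2, s3, s4, zero_smul, one_smul]
    norm_num
  have key : P * P.transpose = hypMat R ν := by
    show (Q.submatrix finSumFinEquiv.symm finSumFinEquiv.symm) *
      (Q.submatrix finSumFinEquiv.symm finSumFinEquiv.symm).transpose = hypMat R ν
    rw [Matrix.transpose_submatrix, Matrix.submatrix_mul_equiv, hb]
    rfl
  have hH : hypMat R ν * hypMat R ν = 1 := by
    show ((Matrix.fromBlocks (0 : Matrix (Fin ν) (Fin ν) R) 1 1 0).submatrix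
        finSumFinEquiv.symm finSumFinEquiv.symm) *
      ((Matrix.fromBlocks (0 : Matrix (Fin ν) (Fin ν) R) 1 1 0).submatrix
        finSumFinEquiv.symm finSumFinEquiv.symm) = 1
    rw [Matrix.submatrix_mul_equiv, Matrix.fromBlocks_multiply]
    simp
  refine ⟨P, ?_, by simpa using key⟩
  have : P * (P.transpose * hypMat R ν) = 1 := by rw [← mul_assoc, key, hH]
  exact Matrix.isUnit_det_of_right_inverse this
end

section
/- Let R be a finite commutative local ring of odd characteristic in which -1 is a square of a unit, let z be a unit of R that is not a square of a unit, and let ν be a positive integer. Then I_{2ν} ⊕ (z) is cogredient to H_{2ν} ⊕ (z) over R. -/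
section AuxStmt18

open Matrix

variable {R : Type*} [CommRing R]

lemma cogredient_reindex_aux {n m : Type*} [Fintype n] [DecidableEq n] [Fintype m]
    [DecidableEq m] (e : n ≃ m) {S1 S2 : Matrix n n R} (h : Cogredient S1 S2) :
    Cogredient (Matrix.reindex e e S1) (Matrix.reindex e e S2) := by
  obtain ⟨P, h1, h2⟩ := h
  refine ⟨Matrix.reindex e e P, by simpa using h1, ?_⟩
  simp only [Matrix.reindex_apply, Matrix.transpose_submatrix, Matrix.submatrix_mul_equiv]
  rw [h2]

lemma cogredient_fromBlocks_left_aux {n m : Type*} [Fintype n] [DecidableEq n] [Fintype m]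
    [DecidableEq m] {A A' : Matrix n n R} (B : Matrix m m R) (h : Cogredient A A') :
    Cogredient (Matrix.fromBlocks A 0 0 B) (Matrix.fromBlocks A' 0 0 B) := by
  obtain ⟨P, h1, h2⟩ := h
  refine ⟨Matrix.fromBlocks P 0 0 1, ?_, ?_⟩
  · rw [Matrix.det_fromBlocks_zero₂₁]
    simpa using h1
  · simp [Matrix.fromBlocks_transpose, Matrix.fromBlocks_multiply, h2]

lemma smul_one_eq_one_aux {n : Type*} [Fintype n] [DecidableEq n] {c : R} (hc : c = 1) :
    c • (1 : Matrix n n R) = 1 := by rw [hc, one_smul]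

lemma smul_one_eq_zero_aux {n : Type*} [Fintype n] [DecidableEq n] {c : R} (hc : c = 0) :
    c • (1 : Matrix n n R) = 0 := by rw [hc, zero_smul]

lemma cogredient_one_hyp_aux {n : Type*} [Fintype n] [DecidableEq n]
    (i h : R) (hi : i * i = -1) (hh : 2 * h = 1) :
    Cogredient (1 : Matrix (n ⊕ n) (n ⊕ n) R)
      (Matrix.fromBlocks (0 : Matrix n n R) 1 1 0) := by
  have eA : (1 : Matrix n n R) * (h • 1) + (i • 1) * (-(i * h) • 1) = 1 := by
    simp only [Matrix.smul_mul, Matrix.mul_smul, one_mul, mul_one, smul_smul, ← add_smul]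
    exact smul_one_eq_one_aux (by linear_combination hh - h * hi)
  have eB : (1 : Matrix n n R) * 1 + (i • 1) * (i • 1) = 0 := by
    simp only [Matrix.smul_mul, Matrix.mul_smul, one_mul, mul_one, smul_smul]
    rw [hi, neg_smul, one_smul, add_neg_cancel]
  have eC : (h • 1 : Matrix n n R) * (h • 1) + (-(i * h) • 1) * (-(i * h) • 1) = 0 := by
    simp only [Matrix.smul_mul, Matrix.mul_smul, one_mul, mul_one, smul_smul, ← add_smul]
    exact smul_one_eq_zero_aux (by linear_combination (h * h) * hi)
  have eD : (h • 1 : Matrix n n R) * 1 + (-(i * h) • 1) * (i • 1) = 1 := by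
    simp only [Matrix.smul_mul, Matrix.mul_smul, one_mul, mul_one, smul_smul, ← add_smul]
    exact smul_one_eq_one_aux (by linear_combination hh - h * hi)
  have eE : (1 : Matrix n n R) * 1 + (i • 1) * (i • 1)ᵀ = 0 := by
    rw [Matrix.transpose_smul, Matrix.transpose_one]; exact eB
  have eF : (1 : Matrix n n R) * (h • 1)ᵀ + (i • 1) * (-(i * h) • 1)ᵀ = 1 := by
    rw [Matrix.transpose_smul, Matrix.transpose_smul, Matrix.transpose_one]; exact eA
  have eG : (h • 1 : Matrix n n R) * 1 + (-(i * h) • 1) * (i • 1)ᵀ = 1 := by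
    rw [Matrix.transpose_smul, Matrix.transpose_one]; exact eD
  have eH : (h • 1 : Matrix n n R) * (h • 1)ᵀ + (-(i * h) • 1) * (-(i * h) • 1)ᵀ = 0 := by
    rw [Matrix.transpose_smul, Matrix.transpose_smul, Matrix.transpose_one]; exact eC
  refine ⟨Matrix.fromBlocks 1 (i • 1) (h • 1) (-(i * h) • 1), ?_, ?_⟩
  · apply Matrix.isUnit_det_of_right_inverse
      (B := Matrix.fromBlocks (h • 1) 1 (-(i * h) • 1) (i • 1))
    rw [Matrix.fromBlocks_multiply, eA, eB, eC, eD, Matrix.fromBlocks_one]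
  · rw [mul_one, Matrix.fromBlocks_transpose, Matrix.transpose_one,
      Matrix.fromBlocks_multiply, eE, eF, eG, eH]

end AuxStmt18

/-- if -1 is a square of a unit, z is a non-square unit and ν is a
positive integer, then `I_{2ν} ⊕ (z)` is cogredient to `H_{2ν} ⊕ (z)`. -/
theorem stmt_18 (R : Type*) [CommRing R] [IsLocalRing R] [Fintype R]
    (hchar : Odd (ringChar R)) (hm1 : ∃ a : Rˣ, (-1 : R) = (a : R) ^ 2)
    (z : Rˣ) (hz : ∀ a : Rˣ, z ≠ a ^ 2) (ν : ℕ) (hν : 0 < ν) :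
    Cogredient (matOplus (1 : Matrix (Fin (ν + ν)) (Fin (ν + ν)) R)
        (Matrix.diagonal fun _ : Fin 1 => (z : R)))
      (matOplus (hypMat R ν) (Matrix.diagonal fun _ : Fin 1 => (z : R))) := by
  obtain ⟨a, ha⟩ := hm1
  obtain ⟨k, hk⟩ := hchar
  -- the scalar `h` below is an inverse of 2
  have hcast : ((ringChar R : ℕ) : R) = 0 := (ringChar.spec R (ringChar R)).mpr dvd_rfl
  have hh : 2 * ((k + 1 : ℕ) : R) = 1 := by
    calc 2 * ((k + 1 : ℕ) : R) = ((2 * (k + 1) : ℕ) : R) := by push_cast; ring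
      _ = ((ringChar R : ℕ) : R) + 1 := by rw [hk]; push_cast; ring
      _ = 1 := by rw [hcast, zero_add]
  have hi : (a : R) * (a : R) = -1 := by rw [← sq, ← ha]
  -- the key cogredience over the sum type
  have key : Cogredient (1 : Matrix (Fin ν ⊕ Fin ν) (Fin ν ⊕ Fin ν) R)
      (Matrix.fromBlocks (0 : Matrix (Fin ν) (Fin ν) R) 1 1 0) :=
    cogredient_one_hyp_aux (a : R) ((k + 1 : ℕ) : R) hi hh
  have key2 : Cogredient (1 : Matrix (Fin (ν + ν)) (Fin (ν + ν)) R) (hypMat R ν) := by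
    have := cogredient_reindex_aux (R := R) finSumFinEquiv key
    rw [show (Matrix.reindex finSumFinEquiv finSumFinEquiv)
        (1 : Matrix (Fin ν ⊕ Fin ν) (Fin ν ⊕ Fin ν) R) = 1 by
      simp [Matrix.reindex_apply, Matrix.submatrix_one_equiv]] at this
    exact this
  unfold matOplus
  exact cogredient_reindex_aux finSumFinEquiv
    (cogredient_fromBlocks_left_aux _ key2)
end
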